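/- Let d > 0, p > 0, L ≥ 0 be real numbers and let T ≥ 1 be a real number. Let N : ℝ → ℝ be a function with N r ≤ p * r^(−d) for every r ∈ (0,1]. Suppose a real number R satisfies, for every r₀ ∈ (0,1], R ≤ 28*T*r₀ + ∑_{i ∈ ℕ, r₀ ≤ 2^(−i) ≤ 1} 56 * 2^i * N(2^(−i)) * L. Then R ≤ (28 + 112*p*L) * T^((1+d)/(2+d)). -/

import Mathlib

/-!
Only the scales `2⁻ⁱ ≥ r₀` contribute to the sum, i.e. `i ≤ n := log₂ ⌊r₀⁻¹⌋`. By the bound on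
`N`, the `i`-th term is at most `56 p L (2ⁱ)^(1+d)`, a geometric sequence of ratio `2^(1+d) ≥ 2`,
so the sum is at most twice its last term, hence at most `112 p L r₀^(-(1+d))` since `2ⁿ ≤ r₀⁻¹`.
The choice `r₀ = T^(-1/(2+d))` makes both `T r₀` and `r₀^(-(1+d))` equal to `T^((1+d)/(2+d))`.
-/

open Finset

theorem geom_sum_le_two_mul_pow {α : Type*} [Semiring α] [PartialOrder α] [IsOrderedRing α]
    {x : α} (hx : 2 ≤ x) (n : ℕ) : ∑ i ∈ range (n + 1), x ^ i ≤ 2 * x ^ n := by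
  induction n with
  | zero => simpa using one_le_two
  | succ n ih =>
    have hpow : 2 * x ^ n ≤ x ^ (n + 1) := by
      rw [pow_succ']
      exact mul_le_mul_of_nonneg_right hx (pow_nonneg (zero_le_two.trans hx) n)
    calc ∑ i ∈ range (n + 1 + 1), x ^ i = ∑ i ∈ range (n + 1), x ^ i + x ^ (n + 1) :=
          sum_range_succ _ _
      _ ≤ x ^ (n + 1) + x ^ (n + 1) := add_le_add_left (ih.trans hpow) _
      _ = 2 * x ^ (n + 1) := (two_mul _).symm

theorem sum_range_two_pow_rpow_le {a : ℝ} (ha : 1 ≤ a) (n : ℕ) :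
    ∑ i ∈ range (n + 1), ((2 : ℝ) ^ i) ^ a ≤ 2 * ((2 : ℝ) ^ n) ^ a := by
  have hcomm (i : ℕ) : ((2 : ℝ) ^ i) ^ a = ((2 : ℝ) ^ a) ^ i := by
    rw [← Real.rpow_natCast_mul zero_le_two, mul_comm, Real.rpow_mul_natCast zero_le_two]
  simp only [hcomm]
  refine geom_sum_le_two_mul_pow ?_ n
  simpa using Real.rpow_le_rpow_of_exponent_le one_le_two ha

theorem le_inv_two_pow_iff_le_log_floor {r : ℝ} (hr₀ : 0 < r) (hr₁ : r ≤ 1) (i : ℕ) :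
    r ≤ ((2 : ℝ) ^ i)⁻¹ ↔ i ≤ Nat.log 2 ⌊r⁻¹⌋₊ := by
  have hfloor : ⌊r⁻¹⌋₊ ≠ 0 := (Nat.floor_pos.2 (one_le_inv₀ hr₀ |>.2 hr₁)).ne'
  rw [Nat.le_log_iff_pow_le one_lt_two hfloor, Nat.le_floor_iff (inv_nonneg.2 hr₀.le),
    le_inv_comm₀ hr₀ (by positivity)]
  norm_cast

theorem tsum_ite_dyadic_eq_sum {r : ℝ} (hr₀ : 0 < r) (hr₁ : r ≤ 1) (g : ℕ → ℝ) :
    ∑' i : ℕ, (if r ≤ ((2 : ℝ) ^ i)⁻¹ ∧ ((2 : ℝ) ^ i)⁻¹ ≤ 1 then g i else 0)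
      = ∑ i ∈ range (Nat.log 2 ⌊r⁻¹⌋₊ + 1), g i := by
  have hcond (i : ℕ) :
      (r ≤ ((2 : ℝ) ^ i)⁻¹ ∧ ((2 : ℝ) ^ i)⁻¹ ≤ 1) ↔ i ∈ range (Nat.log 2 ⌊r⁻¹⌋₊ + 1) := by
    rw [mem_range, Nat.lt_succ_iff, ← le_inv_two_pow_iff_le_log_floor hr₀ hr₁,
      and_iff_left (inv_le_one_of_one_le₀ (one_le_pow₀ one_le_two))]
  simp only [hcond]
  rw [tsum_eq_sum (s := range _) (fun i hi => if_neg hi)]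
  exact sum_congr rfl fun i hi => if_pos hi

theorem two_pow_mul_apply_inv_two_pow_le {d p : ℝ} (hd : 0 ≤ d) {N : ℝ → ℝ}
    (hN : ∀ r ∈ Set.Ioc (0 : ℝ) 1, N r ≤ p * r ^ (-d)) (i : ℕ) :
    (2 : ℝ) ^ i * N ((2 : ℝ) ^ i)⁻¹ ≤ p * ((2 : ℝ) ^ i) ^ (1 + d) := by
  have h2i : (0 : ℝ) ≤ 2 ^ i := by positivity
  have hNi := hN ((2 : ℝ) ^ i)⁻¹ ⟨by positivity, inv_le_one_of_one_le₀ (one_le_pow₀ one_le_two)⟩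
  rw [Real.inv_rpow h2i, Real.rpow_neg h2i, inv_inv] at hNi
  rw [Real.rpow_one_add' h2i (by linarith), mul_left_comm]
  exact mul_le_mul_of_nonneg_left hNi h2i

theorem tsum_dyadic_le {d p L : ℝ} (hd : 0 ≤ d) (hp : 0 ≤ p) (hL : 0 ≤ L) {N : ℝ → ℝ}
    (hN : ∀ r ∈ Set.Ioc (0 : ℝ) 1, N r ≤ p * r ^ (-d)) {r : ℝ} (hr₀ : 0 < r) (hr₁ : r ≤ 1) :
    ∑' i : ℕ, (if r ≤ ((2 : ℝ) ^ i)⁻¹ ∧ ((2 : ℝ) ^ i)⁻¹ ≤ 1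
        then 56 * (2 : ℝ) ^ i * N ((2 : ℝ) ^ i)⁻¹ * L else 0)
      ≤ 112 * p * L * r ^ (-(1 + d)) := by
  set n := Nat.log 2 ⌊r⁻¹⌋₊
  have hn : (2 : ℝ) ^ n ≤ r⁻¹ :=
    (le_inv_comm₀ hr₀ (by positivity)).1 ((le_inv_two_pow_iff_le_log_floor hr₀ hr₁ n).2 le_rfl)
  have hpL : 0 ≤ 56 * p * L := by positivity
  rw [tsum_ite_dyadic_eq_sum hr₀ hr₁]
  calc ∑ i ∈ range (n + 1), 56 * (2 : ℝ) ^ i * N ((2 : ℝ) ^ i)⁻¹ * L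
      ≤ ∑ i ∈ range (n + 1), 56 * p * L * ((2 : ℝ) ^ i) ^ (1 + d) := by
        refine sum_le_sum fun i _ => ?_
        have := two_pow_mul_apply_inv_two_pow_le hd hN i
        nlinarith
    _ = 56 * p * L * ∑ i ∈ range (n + 1), ((2 : ℝ) ^ i) ^ (1 + d) := (mul_sum _ _ _).symm
    _ ≤ 56 * p * L * (2 * ((2 : ℝ) ^ n) ^ (1 + d)) :=
        mul_le_mul_of_nonneg_left (sum_range_two_pow_rpow_le (by linarith) n) hpL
    _ ≤ 56 * p * L * (2 * r⁻¹ ^ (1 + d)) := by gcongr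
    _ = 112 * p * L * r ^ (-(1 + d)) := by
        rw [Real.inv_rpow hr₀.le, ← Real.rpow_neg hr₀.le]; ring

/-- Theorem 1 of the paper (arithmetic content). -/
theorem stmt_0 (d p L T R : ℝ) (hd : 0 < d) (hp : 0 < p) (hL : 0 ≤ L) (hT : 1 ≤ T)
    (N : ℝ → ℝ)
    (hN : ∀ r ∈ Set.Ioc (0:ℝ) 1, N r ≤ p * r ^ (-d))
    (hR : ∀ r₀ ∈ Set.Ioc (0:ℝ) 1,
      R ≤ 28 * T * r₀ + ∑' i : ℕ,
        (if r₀ ≤ ((2:ℝ) ^ i)⁻¹ ∧ ((2:ℝ) ^ i)⁻¹ ≤ 1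
          then 56 * (2:ℝ) ^ i * N (((2:ℝ) ^ i)⁻¹) * L else 0)) :
    R ≤ (28 + 112 * p * L) * T ^ ((1 + d) / (2 + d)) := by
  have hT₀ : 0 < T := one_pos.trans_le hT
  have hd₂ : 2 + d ≠ 0 := by positivity
  set r := T ^ (-(2 + d)⁻¹)
  have hr₀ : 0 < r := Real.rpow_pos_of_pos hT₀ _
  have hr₁ : r ≤ 1 := Real.rpow_le_one_of_one_le_of_nonpos hT (neg_nonpos.2 (by positivity))
  have hTr : T * r = T ^ ((1 + d) / (2 + d)) := by
    have hexp : 1 + -(2 + d)⁻¹ = (1 + d) / (2 + d) := by field_simp; ring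
    rw [← hexp, Real.rpow_one_add' hT₀.le (by rw [hexp]; positivity)]
  have hr : r ^ (-(1 + d)) = T ^ ((1 + d) / (2 + d)) := by
    rw [← Real.rpow_mul hT₀.le]
    congr 1
    field_simp
  calc R ≤ 28 * T * r + ∑' i : ℕ, (if r ≤ ((2 : ℝ) ^ i)⁻¹ ∧ ((2 : ℝ) ^ i)⁻¹ ≤ 1
          then 56 * (2 : ℝ) ^ i * N ((2 : ℝ) ^ i)⁻¹ * L else 0) := hR r ⟨hr₀, hr₁⟩
    _ ≤ 28 * T * r + 112 * p * L * r ^ (-(1 + d)) := by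
        gcongr
        exact tsum_dyadic_le hd.le hp.le hL hN hr₀ hr₁
    _ = (28 + 112 * p * L) * T ^ ((1 + d) / (2 + d)) := by
        rw [mul_assoc, hTr, hr]
        ring
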